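/- Let ω : ℕ → (0, ∞) and let H_ω be the Hilbert space of sequences a : ℕ → ℂ with ‖a‖² = ∑_{n≥0} ω_n |a_n|² < ∞. Suppose the two-step shift T, defined by (Ta)_n = a_{n−2} for n ≥ 2 and (Ta)_0 = (Ta)_1 = 0, is bounded on H_ω. Then the inequality ‖x + Ty‖² ≤ 2(‖Tx‖² + ‖y‖²) holds for all x, y ∈ H_ω if and only if all of the following hold: (a) ω_0 ≤ 2ω_2; (b) ω_1 ≤ 2ω_3; (c) 1/ω_{n−2} + 1/ω_{n+2} ≤ 2/ω_n for all n ≥ 2. -/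

import Mathlib

open MeasureTheory

/-- The measure on `ℕ` giving the singleton `{n}` mass `ω n`. -/
noncomputable def weightMeasure (ω : ℕ → ℝ) : Measure ℕ :=
  Measure.count.withDensity (fun n => ENNReal.ofReal (ω n))

attribute [irreducible] weightMeasure

/-- The weighted `ℓ²` space `H_ω` with `‖a‖² = ∑ ωₙ |aₙ|²`. -/
noncomputable abbrev Hweighted (ω : ℕ → ℝ) : Type := Lp ℂ 2 (weightMeasure ω)

/-!
In coordinates, `2 (‖T x‖² + ‖y‖²) - ‖x + T y‖²` is a sum of independent terms, one for each
index `n`. For `n = 0, 1` the term is `(2 ω_{n+2} - ω_n) |x_n|²`; for `n ≥ 2` it is the binary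
quadratic form `2 ω_{n+2} |x_n|² + 2 ω_{n-2} |y_{n-2}|² - ω_n |x_n + y_{n-2}|²`, which is
nonnegative exactly when `1/ω_{n-2} + 1/ω_{n+2} ≤ 2/ω_n` (Cauchy–Schwarz). Conversely, testing
the inequality on `x = e_k, y = 0` and on `x = s e_{k+2}, y = t e_k` recovers the conditions.
-/

open scoped ENNReal

def shiftSeq {α : Type*} [Zero α] (k : ℕ) (f : ℕ → α) (n : ℕ) : α :=
  if k ≤ n then f (n - k) else 0

section shiftSeq

variable {α : Type*} [Zero α]

@[simp]
lemma shiftSeq_add (k : ℕ) (f : ℕ → α) (n : ℕ) : shiftSeq k f (n + k) = f n := by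
  simp [shiftSeq]

lemma shiftSeq_of_lt {k n : ℕ} (f : ℕ → α) (h : n < k) : shiftSeq k f n = 0 := by
  simp [shiftSeq, Nat.not_le.2 h]

lemma shiftSeq_eq_extend (k : ℕ) (f : ℕ → α) : shiftSeq k f = Function.extend (· + k) f 0 := by
  funext n
  rcases lt_or_ge n k with h | h
  · rw [shiftSeq_of_lt f h, Function.extend_apply' _ _ _ (by rintro ⟨m, rfl⟩; omega)]
    rfl
  · obtain ⟨m, rfl⟩ := Nat.exists_eq_add_of_le' h
    rw [shiftSeq_add, (add_left_injective k).extend_apply]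

lemma shiftSeq_single [DecidableEq α] (k j : ℕ) (c : α) :
    shiftSeq k (Pi.single j c) = Pi.single (j + k) c := by
  funext n
  rcases lt_or_ge n k with h | h
  · rw [shiftSeq_of_lt _ h, Pi.single_eq_of_ne (by omega)]
  · obtain ⟨m, rfl⟩ := Nat.exists_eq_add_of_le' h
    simp [Pi.single_apply]

lemma shiftSeq_nonneg {β : Type*} [Preorder β] [Zero β] {f : ℕ → β} (hf : ∀ n, 0 ≤ f n)
    (k n : ℕ) : 0 ≤ shiftSeq k f n := by
  unfold shiftSeq
  split_ifs
  exacts [hf _, le_rfl]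

lemma apply_shiftSeq {β : Type*} [Zero β] (g : α → β) (hg : g 0 = 0) (k : ℕ) (f : ℕ → α)
    (n : ℕ) : g (shiftSeq k f n) = shiftSeq k (g ∘ f) n := by
  unfold shiftSeq
  split_ifs <;> simp [hg]

lemma tsum_shiftSeq {M : Type*} [AddCommMonoid M] [TopologicalSpace M] (k : ℕ) (f : ℕ → M) :
    ∑' n, shiftSeq k f n = ∑' n, f n := by
  rw [shiftSeq_eq_extend, tsum_extend_zero (add_left_injective k)]

lemma tsum_ofReal_mul_norm_shiftSeq_sq {E : Type*} [SeminormedAddGroup E] (ω : ℕ → ℝ) (k : ℕ)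
    (f : ℕ → E) :
    ∑' n, ENNReal.ofReal (ω n * ‖shiftSeq k f n‖ ^ 2) =
      ∑' n, ENNReal.ofReal (ω (n + k) * ‖f n‖ ^ 2) := by
  rw [← tsum_shiftSeq k (fun n => ENNReal.ofReal (ω (n + k) * ‖f n‖ ^ 2))]
  refine tsum_congr fun n => ?_
  rcases lt_or_ge n k with h | h
  · simp [shiftSeq_of_lt _ h]
  · obtain ⟨m, rfl⟩ := Nat.exists_eq_add_of_le' h
    simp

end shiftSeq

lemma weightMeasure_eq (ω : ℕ → ℝ) :
    weightMeasure ω = Measure.count.withDensity (fun n => ENNReal.ofReal (ω n)) := by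
  rw [weightMeasure]

lemma weightMeasure_singleton (ω : ℕ → ℝ) (n : ℕ) :
    weightMeasure ω {n} = ENNReal.ofReal (ω n) := by
  simp [weightMeasure_eq, withDensity_apply _ (measurableSet_singleton n)]

lemma lintegral_weightMeasure (ω : ℕ → ℝ) (f : ℕ → ℝ≥0∞) :
    ∫⁻ n, f n ∂weightMeasure ω = ∑' n, ENNReal.ofReal (ω n) * f n := by
  rw [weightMeasure_eq, lintegral_withDensity_eq_lintegral_mul _ (measurable_of_countable _)
    (measurable_of_countable _), lintegral_count]
  rfl

lemma ae_weightMeasure_iff {ω : ℕ → ℝ} (hω : ∀ n, 0 < ω n) {p : ℕ → Prop} :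
    (∀ᵐ n ∂weightMeasure ω, p n) ↔ ∀ n, p n := by
  simp [ae_iff_of_countable, weightMeasure_singleton, hω]

namespace Hweighted

variable {ω : ℕ → ℝ}

lemma coeFn_add (hω : ∀ n, 0 < ω n) (f g : Hweighted ω) : ⇑(f + g) = ⇑f + ⇑g :=
  funext ((ae_weightMeasure_iff hω).1 (Lp.coeFn_add f g))

lemma ofReal_norm_sq (hω : ∀ n, 0 ≤ ω n) (f : Hweighted ω) :
    ENNReal.ofReal (‖f‖ ^ 2) = ∑' n, ENNReal.ofReal (ω n * ‖f n‖ ^ 2) := by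
  have h := eLpNorm_nnreal_pow_eq_lintegral (f := ⇑f) (μ := weightMeasure ω) (p := 2)
    two_ne_zero
  simp only [ENNReal.coe_ofNat, NNReal.coe_ofNat, ENNReal.rpow_ofNat] at h
  rw [ENNReal.ofReal_pow (norm_nonneg f), ofReal_norm, Lp.enorm_def, h,
    lintegral_weightMeasure]
  refine tsum_congr fun n => ?_
  rw [ENNReal.ofReal_mul (hω n), ENNReal.ofReal_pow (norm_nonneg _), ofReal_norm]

noncomputable def single (ω : ℕ → ℝ) (k : ℕ) (c : ℂ) : Hweighted ω :=
  indicatorConstLp 2 (measurableSet_singleton k) (by simp [weightMeasure_singleton]) c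

lemma coeFn_single (hω : ∀ n, 0 < ω n) (k : ℕ) (c : ℂ) :
    ⇑(single ω k c) = Pi.single k c := by
  have h : ⇑(single ω k c) =ᵐ[weightMeasure ω] _ := indicatorConstLp_coeFn
  exact (funext ((ae_weightMeasure_iff hω).1 h)).trans (Set.indicator_singleton k _)

lemma norm_single_sq (hω : ∀ n, 0 ≤ ω n) (k : ℕ) (c : ℂ) :
    ‖single ω k c‖ ^ 2 = ω k * ‖c‖ ^ 2 := by
  rw [single, norm_indicatorConstLp two_ne_zero ENNReal.ofNat_ne_top, measureReal_def,
    weightMeasure_singleton, ENNReal.toReal_ofReal (hω k), mul_pow, ENNReal.toReal_ofNat,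
    ← Real.sqrt_eq_rpow, Real.sq_sqrt (hω k), mul_comm]

lemma single_zero (hω : ∀ n, 0 ≤ ω n) (k : ℕ) : single ω k 0 = 0 := by
  simpa using norm_single_sq hω k 0

lemma single_add (k : ℕ) (a b : ℂ) : single ω k a + single ω k b = single ω k (a + b) :=
  indicatorConstLp_add

end Hweighted

lemma forall_mul_add_sq_le_iff {p q r : ℝ} (hp : 0 < p) (hq : 0 < q) (hr : 0 < r) :
    (∀ s t : ℝ, q * (s + t) ^ 2 ≤ 2 * (r * s ^ 2 + p * t ^ 2)) ↔ 1 / p + 1 / r ≤ 2 / q := by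
  constructor
  · intro h
    have hpr : 0 < 1 / p + 1 / r := by positivity
    have hnorm : r * (1 / r) ^ 2 + p * (1 / p) ^ 2 = 1 / p + 1 / r := by field_simp; ring
    have h' := h (1 / r) (1 / p)
    rw [hnorm, add_comm (1 / r)] at h'
    rw [le_div_iff₀ hq]
    nlinarith
  · intro h s t
    -- Cauchy–Schwarz for the pairs `(√r s, √p t)` and `(1/√r, 1/√p)`.
    have hcs : (s + t) ^ 2 ≤ (1 / p + 1 / r) * (r * s ^ 2 + p * t ^ 2) := by
      have : (1 / p + 1 / r) * (r * s ^ 2 + p * t ^ 2) - (s + t) ^ 2 =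
          (r * s - p * t) ^ 2 / (p * r) := by
        field_simp
        ring
      nlinarith [div_nonneg (sq_nonneg (r * s - p * t)) (mul_pos hp hr).le]
    calc q * (s + t) ^ 2 ≤ q * ((1 / p + 1 / r) * (r * s ^ 2 + p * t ^ 2)) := by gcongr
      _ ≤ q * (2 / q * (r * s ^ 2 + p * t ^ 2)) := by gcongr
      _ = 2 * (r * s ^ 2 + p * t ^ 2) := by field_simp

lemma mul_norm_add_sq_le {E : Type*} [SeminormedAddGroup E] {p q r : ℝ} (hp : 0 < p)
    (hq : 0 < q) (hr : 0 < r) (h : 1 / p + 1 / r ≤ 2 / q) (a b : E) :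
    q * ‖a + b‖ ^ 2 ≤ 2 * (r * ‖a‖ ^ 2 + p * ‖b‖ ^ 2) :=
  calc q * ‖a + b‖ ^ 2 ≤ q * (‖a‖ + ‖b‖) ^ 2 := by gcongr; exact norm_add_le a b
    _ ≤ _ := (forall_mul_add_sq_le_iff hp hq hr).2 h _ _

lemma mul_norm_add_shiftSeq_two_sq_le {E : Type*} [SeminormedAddGroup E] {ω : ℕ → ℝ}
    (hω : ∀ n, 0 < ω n) (h₀ : ω 0 ≤ 2 * ω 2) (h₁ : ω 1 ≤ 2 * ω 3)
    (h : ∀ n, 2 ≤ n → 1 / ω (n - 2) + 1 / ω (n + 2) ≤ 2 / ω n) (a b : ℕ → E) (n : ℕ) :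
    ω n * ‖a n + shiftSeq 2 b n‖ ^ 2 ≤
      2 * (ω (n + 2) * ‖a n‖ ^ 2 + shiftSeq 2 (fun k => ω k * ‖b k‖ ^ 2) n) := by
  rcases n with _ | _ | m
  · simpa [shiftSeq_of_lt, mul_assoc] using mul_le_mul_of_nonneg_right h₀ (sq_nonneg ‖a 0‖)
  · simpa [shiftSeq_of_lt, mul_assoc] using mul_le_mul_of_nonneg_right h₁ (sq_nonneg ‖a 1‖)
  · simpa using mul_norm_add_sq_le (hω m) (hω (m + 2)) (hω (m + 4))
      (by simpa using h (m + 2) le_add_self) (a (m + 2)) (b m)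

section TwoStepShift

variable {ω : ℕ → ℝ} {T : Hweighted ω → Hweighted ω}

lemma norm_add_shift_sq_le (hω : ∀ n, 0 < ω n) (hT : ∀ a, ⇑(T a) = shiftSeq 2 ⇑a)
    (h₀ : ω 0 ≤ 2 * ω 2) (h₁ : ω 1 ≤ 2 * ω 3)
    (h : ∀ n, 2 ≤ n → 1 / ω (n - 2) + 1 / ω (n + 2) ≤ 2 / ω n) (x y : Hweighted ω) :
    ‖x + T y‖ ^ 2 ≤ 2 * (‖T x‖ ^ 2 + ‖y‖ ^ 2) := by
  have hω' : ∀ n, 0 ≤ ω n := fun n => (hω n).le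
  rw [← ENNReal.ofReal_le_ofReal_iff (by positivity)]
  calc ENNReal.ofReal (‖x + T y‖ ^ 2)
      = ∑' n, ENNReal.ofReal (ω n * ‖x n + shiftSeq 2 y n‖ ^ 2) := by
        rw [Hweighted.ofReal_norm_sq hω', Hweighted.coeFn_add hω, hT]
        rfl
    _ ≤ ∑' n, ENNReal.ofReal
          (2 * (ω (n + 2) * ‖x n‖ ^ 2 + shiftSeq 2 (fun k => ω k * ‖y k‖ ^ 2) n)) :=
        ENNReal.tsum_le_tsum fun n =>
          ENNReal.ofReal_le_ofReal (mul_norm_add_shiftSeq_two_sq_le hω h₀ h₁ h x y n)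
    _ = 2 * (∑' n, ENNReal.ofReal (ω (n + 2) * ‖x n‖ ^ 2) +
          ∑' n, shiftSeq 2 (fun k => ENNReal.ofReal (ω k * ‖y k‖ ^ 2)) n) := by
        rw [← ENNReal.tsum_add, ← ENNReal.tsum_mul_left]
        refine tsum_congr fun n => ?_
        rw [ENNReal.ofReal_mul zero_le_two, ENNReal.ofReal_ofNat,
          ENNReal.ofReal_add (mul_nonneg (hω' _) (sq_nonneg _))
            (shiftSeq_nonneg (fun k => mul_nonneg (hω' k) (sq_nonneg _)) 2 n),
          apply_shiftSeq ENNReal.ofReal ENNReal.ofReal_zero]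
        rfl
    _ = ENNReal.ofReal (2 * (‖T x‖ ^ 2 + ‖y‖ ^ 2)) := by
        rw [tsum_shiftSeq, ENNReal.ofReal_mul zero_le_two, ENNReal.ofReal_ofNat,
          ENNReal.ofReal_add (sq_nonneg _) (sq_nonneg _), Hweighted.ofReal_norm_sq hω',
          Hweighted.ofReal_norm_sq hω', hT, tsum_ofReal_mul_norm_shiftSeq_sq]

lemma apply_single_of_eq_shiftSeq (hω : ∀ n, 0 < ω n) (hT : ∀ a, ⇑(T a) = shiftSeq 2 ⇑a)
    (k : ℕ) (c : ℂ) : T (Hweighted.single ω k c) = Hweighted.single ω (k + 2) c :=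
  Lp.ext <| .of_eq <| by
    rw [hT, Hweighted.coeFn_single hω, Hweighted.coeFn_single hω, shiftSeq_single]

lemma le_two_mul_of_norm_add_shift_sq_le (hω : ∀ n, 0 < ω n)
    (hT : ∀ a, ⇑(T a) = shiftSeq 2 ⇑a)
    (H : ∀ x y : Hweighted ω, ‖x + T y‖ ^ 2 ≤ 2 * (‖T x‖ ^ 2 + ‖y‖ ^ 2)) (k : ℕ) :
    ω k ≤ 2 * ω (k + 2) := by
  have hω' : ∀ n, 0 ≤ ω n := fun n => (hω n).le
  have hT₀ : T 0 = 0 :=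
    calc T 0 = T (Hweighted.single ω 0 0) := by rw [Hweighted.single_zero hω']
      _ = 0 := by rw [apply_single_of_eq_shiftSeq hω hT, Hweighted.single_zero hω']
  simpa [hT₀, apply_single_of_eq_shiftSeq hω hT, Hweighted.norm_single_sq hω'] using
    H (Hweighted.single ω k 1) 0

lemma one_div_add_one_div_le_of_norm_add_shift_sq_le (hω : ∀ n, 0 < ω n)
    (hT : ∀ a, ⇑(T a) = shiftSeq 2 ⇑a)
    (H : ∀ x y : Hweighted ω, ‖x + T y‖ ^ 2 ≤ 2 * (‖T x‖ ^ 2 + ‖y‖ ^ 2)) (k : ℕ) :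
    1 / ω k + 1 / ω (k + 4) ≤ 2 / ω (k + 2) := by
  have hω' : ∀ n, 0 ≤ ω n := fun n => (hω n).le
  refine (forall_mul_add_sq_le_iff (hω k) (hω (k + 2)) (hω (k + 4))).1 fun s t => ?_
  have hst := H (Hweighted.single ω (k + 2) s) (Hweighted.single ω k t)
  rw [apply_single_of_eq_shiftSeq hω hT, apply_single_of_eq_shiftSeq hω hT,
    Hweighted.single_add, ← Complex.ofReal_add] at hst
  simp only [Hweighted.norm_single_sq hω', Complex.norm_real, Real.norm_eq_abs, sq_abs] at hst
  exact hst

end TwoStepShift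

/-- Shimorin's inequality for the two-step shift `T` on a weighted `ℓ²` space `H_ω`
holds iff (a) `ω₀ ≤ 2ω₂`, (b) `ω₁ ≤ 2ω₃`, and (c) `1/ω_{n-2} + 1/ω_{n+2} ≤ 2/ωₙ`
for all `n ≥ 2`. -/
theorem two_step_shift_shimorin_iff
    (ω : ℕ → ℝ) (hω : ∀ n, 0 < ω n)
    (T : Hweighted ω →L[ℂ] Hweighted ω)
    (hT : ∀ a : Hweighted ω, ∀ n : ℕ,
      (T a : ℕ → ℂ) n = if 2 ≤ n then (a : ℕ → ℂ) (n - 2) else 0) :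
    (∀ x y : Hweighted ω, ‖x + T y‖ ^ 2 ≤ 2 * (‖T x‖ ^ 2 + ‖y‖ ^ 2)) ↔
      (ω 0 ≤ 2 * ω 2 ∧ ω 1 ≤ 2 * ω 3 ∧
        ∀ n : ℕ, 2 ≤ n → 1 / ω (n - 2) + 1 / ω (n + 2) ≤ 2 / ω n) := by
  have hT' : ∀ a, ⇑(T a) = shiftSeq 2 ⇑a := fun a => funext (hT a)
  constructor
  · intro H
    refine ⟨le_two_mul_of_norm_add_shift_sq_le hω hT' H 0,
      le_two_mul_of_norm_add_shift_sq_le hω hT' H 1, fun n hn => ?_⟩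
    obtain ⟨k, rfl⟩ := Nat.exists_eq_add_of_le' hn
    simpa using one_div_add_one_div_le_of_norm_add_shift_sq_le hω hT' H k
  · rintro ⟨h₀, h₁, h⟩ x y
    exact norm_add_shift_sq_le hω hT' h₀ h₁ h x y
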